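/- For any deterministic finite-state automaton M = (Q, Σ, δ, q_init, F) with |Q| = N, there exist an initial vector x_0 ∈ ℝ^N, a family of column one-hot matrices A(σ) ∈ {0,1}^{N×N} indexed by σ ∈ Σ, and a linear readout vector C ∈ ℝ^{1×N}, such that for every input word w = σ_1 … σ_T ∈ Σ*, the recurrence x_t = A(σ_t) x_{t-1} (for t = 1, …, T) satisfies C x_T = 1 if M accepts w and C x_T = 0 otherwise. (Proposition 1: any deterministic FSA with N states is exactly represented by a single-layer Flash PD-SSM with state size N and a linear readout of size N.) -/
import Mathlib


open Matrix

/-- **Proposition 1 (Expressivity of Flash PD-SSM).**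
Any deterministic FSA `(Q, Σ, δ, q_init, F)` with `|Q| = N` can be exactly represented by a
single-layer Flash PD-SSM with state size `N` and linear readout of size `N`: there is an
initial state `x₀ ∈ ℝ^N`, a family of column one-hot matrices `A σ ∈ {0,1}^{N×N}`, and a
readout vector `C ∈ ℝ^N` such that for every input word `w = σ₁ … σ_T`, the recurrence
`x_t = A σ_t *ᵥ x_{t-1}` satisfies `C ⬝ᵥ x_T = 1` if the FSA accepts `w` and `0` otherwise. -/
theorem dfa_represented_by_flash_pd_ssm
    {Q : Type*} [Fintype Q] [DecidableEq Q] {α : Type*}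
    (N : ℕ) (hN : Fintype.card Q = N)
    (δ : Q → α → Q) (qinit : Q) (F : Finset Q) :
    ∃ (x₀ : Fin N → ℝ) (A : α → Matrix (Fin N) (Fin N) ℝ) (C : Fin N → ℝ),
      (∀ σ, (∀ i j, A σ i j = 0 ∨ A σ i j = 1) ∧ (∀ j, ∃! i, A σ i j = 1)) ∧
      (∀ w : List α,
        C ⬝ᵥ (w.foldl (fun x σ => A σ *ᵥ x) x₀) =
          if w.foldl δ qinit ∈ F then 1 else 0) := by
  obtain ⟨e⟩ : Nonempty (Q ≃ Fin N) := ⟨(Fintype.equivFinOfCardEq hN)⟩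
  refine ⟨Pi.single (e qinit) 1,
    fun σ => Matrix.of (fun i j => if i = e (δ (e.symm j) σ) then (1:ℝ) else 0),
    fun i => if e.symm i ∈ F then 1 else 0, ?_, ?_⟩
  · intro σ
    constructor
    · intro i j
      by_cases h : i = e (δ (e.symm j) σ) <;> simp [h]
    · intro j
      exact ⟨e (δ (e.symm j) σ), by simp, fun i hi => by
        by_contra h; simp [h] at hi⟩
  · intro w
    have key : ∀ (w : List α) (q : Q),
        w.foldl (fun x σ => (Matrix.of (fun i j =>
          if i = e (δ (e.symm j) σ) then (1:ℝ) else 0)) *ᵥ x) (Pi.single (e q) 1)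
          = Pi.single (e (w.foldl δ q)) 1 := by
      intro w
      induction w with
      | nil => intro q; rfl
      | cons a t ih =>
        intro q
        have hstep : (Matrix.of (fun i j =>
            if i = e (δ (e.symm j) a) then (1:ℝ) else 0)) *ᵥ Pi.single (e q) 1
            = Pi.single (e (δ q a)) 1 := by
          ext i
          simp [Matrix.mulVec_single, Pi.single_apply]
        simp only [List.foldl_cons, hstep, ih]
    rw [key w qinit]
    simp [dotProduct_single]
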